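/- The operator norm of the commutator of H_0 and H_f satisfies ‖[H_0, H_f]‖ = ‖H_0 H_f − H_f H_0‖ = √(1/N)·√(1 − 1/N). -/

import Mathlib

/-- The rank-one projector `|ψ⟩⟨ψ|`, mapping `v` to `⟪ψ, v⟫ • ψ`. -/
noncomputable def proj {H : Type*} [NormedAddCommGroup H] [InnerProductSpace ℂ H]
    (ψ : H) : H →L[ℂ] H := (innerSL ℂ ψ).smulRight ψ

/-- The uniform superposition `|s⟩ = (1/√N) ∑_x |x⟩`. -/
noncomputable def uniformState (N : ℕ) : EuclideanSpace ℂ (Fin N) :=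
  ((1 / Real.sqrt N : ℝ) : ℂ) • ∑ x : Fin N, EuclideanSpace.single x (1 : ℂ)

/-
Write `e = |m⟩` and `s = a e + b u` with `u ⊥ e` a unit vector, `a = ⟪e, s⟫ = 1/√N` and
`b = √(1 - a²)`. Since `[1 - P, 1 - Q] = [P, Q]`, the commutator is `[|s⟩⟨s|, |e⟩⟨e|]`, which
expands to `ab (|u⟩⟨e| - |e⟩⟨u|)`: a quarter turn in the plane spanned by `e` and `u` that kills
its orthogonal complement, hence an operator of norm `1`.
-/

open InnerProductSpace
open scoped InnerProductSpace

section RankOne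

variable {𝕜 E : Type*} [RCLike 𝕜] [NormedAddCommGroup E] [InnerProductSpace 𝕜 E]

theorem rankOne_self_commutator_of_eq_smul_add_smul {e u s : E} (h : Orthonormal 𝕜 ![e, u])
    {a b : ℝ} (hs : s = (a : 𝕜) • e + (b : 𝕜) • u) :
    rankOne 𝕜 s s * rankOne 𝕜 e e - rankOne 𝕜 e e * rankOne 𝕜 s s
      = ((a * b : ℝ) : 𝕜) • (rankOne 𝕜 u e - rankOne 𝕜 e u) := by
  have he : ‖e‖ = 1 := h.norm_eq_one 0
  have heu : ⟪e, u⟫_𝕜 = 0 := h.inner_eq_zero (i := 0) (j := 1) (by decide)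
  have hes : ⟪e, s⟫_𝕜 = a := by
    simp [hs, inner_add_right, inner_smul_right, heu, inner_self_eq_norm_sq_to_K, he]
  have hse : ⟪s, e⟫_𝕜 = a := by rw [← inner_conj_symm, hes, RCLike.conj_ofReal]
  simp only [ContinuousLinearMap.mul_def, rankOne_comp_rankOne, hes, hse]
  subst hs
  simp only [map_add, map_smul, map_smulₛₗ, RCLike.conj_ofReal,
    add_apply, FunLike.coe_smul, Pi.smul_apply]
  push_cast
  module

theorem norm_rankOne_sub_rankOne_of_orthonormal {e u : E} (h : Orthonormal 𝕜 ![e, u]) :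
    ‖rankOne 𝕜 u e - rankOne 𝕜 e u‖ = 1 := by
  have he : ‖e‖ = 1 := h.norm_eq_one 0
  have hu : ‖u‖ = 1 := h.norm_eq_one 1
  have hue : ⟪u, e⟫_𝕜 = 0 := h.inner_eq_zero (i := 1) (j := 0) (by decide)
  have hsq : ∀ v,
      ‖(rankOne 𝕜 u e - rankOne 𝕜 e u) v‖ ^ 2 = ‖⟪e, v⟫_𝕜‖ ^ 2 + ‖⟪u, v⟫_𝕜‖ ^ 2 := by
    intro v
    rw [sub_apply, rankOne_apply, rankOne_apply, @norm_sub_sq 𝕜]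
    simp [inner_smul_left, inner_smul_right, hue, norm_smul, he, hu]
  refine le_antisymm (ContinuousLinearMap.opNorm_le_bound _ zero_le_one fun v ↦ ?_) ?_
  · have hBessel := h.sum_inner_products_le v (s := Finset.univ)
    rw [Fin.sum_univ_two] at hBessel
    rw [one_mul, ← sq_le_sq₀ (norm_nonneg _) (norm_nonneg _), hsq]
    simpa using hBessel
  · simpa [he, hu, hue] using
      ContinuousLinearMap.unit_le_opNorm (rankOne 𝕜 u e - rankOne 𝕜 e u) e he.le

theorem exists_orthonormal_eq_smul_add_smul {e s : E} (he : ‖e‖ = 1) (hs : ‖s‖ = 1) {a : ℝ}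
    (hes : ⟪e, s⟫_𝕜 = a) (ha : |a| < 1) :
    ∃ u, Orthonormal 𝕜 ![e, u] ∧ s = (a : 𝕜) • e + (√(1 - a ^ 2) : 𝕜) • u := by
  set w := s - (a : 𝕜) • e
  have hew : ⟪e, w⟫_𝕜 = 0 := by
    simp [w, inner_sub_right, inner_smul_right, hes, inner_self_eq_norm_sq_to_K, he]
  have hw : ‖w‖ = √(1 - a ^ 2) := by
    have hpyth := norm_add_sq_eq_norm_sq_add_norm_sq_of_inner_eq_zero ((a : 𝕜) • e) w
      (by rw [inner_smul_left, hew, mul_zero])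
    rw [add_sub_cancel, hs, norm_smul, he, RCLike.norm_ofReal] at hpyth
    rw [← Real.sqrt_sq (norm_nonneg w)]
    congr 1
    nlinarith [sq_abs a]
  have hw0 : ‖w‖ ≠ 0 := by
    rw [hw, Real.sqrt_ne_zero', sub_pos, ← sq_abs]
    exact pow_lt_one₀ (abs_nonneg a) ha two_ne_zero
  refine ⟨(‖w‖⁻¹ : 𝕜) • w, ?_, ?_⟩
  · simp [orthonormal_vecCons_iff, he, norm_smul_inv_norm (norm_ne_zero_iff.1 hw0),
      inner_smul_right, hew]
  · rw [← hw, smul_smul, ← RCLike.ofReal_inv, ← RCLike.ofReal_mul, mul_inv_cancel₀ hw0,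
      RCLike.ofReal_one, one_smul, add_sub_cancel]

theorem norm_rankOne_self_commutator {e s : E} (he : ‖e‖ = 1) (hs : ‖s‖ = 1) {a : ℝ}
    (hes : ⟪e, s⟫_𝕜 = a) (ha : |a| < 1) :
    ‖rankOne 𝕜 s s * rankOne 𝕜 e e - rankOne 𝕜 e e * rankOne 𝕜 s s‖ = |a| * √(1 - a ^ 2) := by
  obtain ⟨u, hu, rfl⟩ := exists_orthonormal_eq_smul_add_smul he hs hes ha
  rw [rankOne_self_commutator_of_eq_smul_add_smul hu rfl, norm_smul,
    norm_rankOne_sub_rankOne_of_orthonormal hu, mul_one, RCLike.norm_ofReal, abs_mul,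
    abs_of_nonneg (Real.sqrt_nonneg _)]

end RankOne

theorem commutator_one_sub_one_sub {R : Type*} [Ring R] (p q : R) :
    (1 - p) * (1 - q) - (1 - q) * (1 - p) = p * q - q * p := by
  noncomm_ring

theorem proj_eq_rankOne {H : Type*} [NormedAddCommGroup H] [InnerProductSpace ℂ H] (ψ : H) :
    proj ψ = rankOne ℂ ψ ψ :=
  rfl

theorem uniformState_apply (N : ℕ) (x : Fin N) : uniformState N x = ((1 / √N : ℝ) : ℂ) := by
  simp [uniformState]

theorem inner_single_uniformState (N : ℕ) (m : Fin N) :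
    ⟪EuclideanSpace.single m 1, uniformState N⟫_ℂ = ((1 / √N : ℝ) : ℂ) := by
  rw [EuclideanSpace.inner_single_left, uniformState_apply, map_one, one_mul]

theorem norm_uniformState {N : ℕ} (hN : N ≠ 0) : ‖uniformState N‖ = 1 := by
  have hN' : (0 : ℝ) < N := by positivity
  simp [EuclideanSpace.norm_eq, uniformState_apply, Real.sq_sqrt hN'.le, hN'.ne']

/-- The operator norm of the commutator of `H⁰ = I − |s⟩⟨s|` and
`H_f = I − |m⟩⟨m|` equals `√(1/N) · √(1 − 1/N)`. -/
theorem norm_commutator_searchHamiltonians (N : ℕ) (hN : 2 ≤ N) (m : Fin N)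
    (H0 Hf : EuclideanSpace ℂ (Fin N) →L[ℂ] EuclideanSpace ℂ (Fin N))
    (hH0 : H0 = 1 - proj (uniformState N))
    (hHf : Hf = 1 - proj (EuclideanSpace.single m 1)) :
    ‖H0 * Hf - Hf * H0‖ = Real.sqrt (1 / N) * Real.sqrt (1 - 1 / N) := by
  have hsqrt : 1 / √N = √(1 / N) := by rw [Real.sqrt_div' 1 (Nat.cast_nonneg N), Real.sqrt_one]
  have ha : |1 / √N| < 1 := by
    rw [hsqrt, abs_of_nonneg (Real.sqrt_nonneg _), Real.sqrt_lt' one_pos, one_pow,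
      div_lt_one (by positivity)]
    exact_mod_cast hN
  rw [hH0, hHf, commutator_one_sub_one_sub, proj_eq_rankOne, proj_eq_rankOne,
    norm_rankOne_self_commutator (a := 1 / √N) (by simp) (norm_uniformState (by omega))
      (inner_single_uniformState N m) ha, hsqrt, abs_of_nonneg (Real.sqrt_nonneg _),
    Real.sq_sqrt (by positivity)]
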